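/- arXiv:math-ph/0508044 — 4 statements merged into one kernel-verified Lean document; each statement's English description precedes it below -/
import Mathlib

section
/- There is a universal constant C > 0 with the following property. Let (Ω, Σ, P) be a probability space, let 𝔉₁, 𝔉₂ ⊆ Σ be sub-σ-algebras, and let φ ≥ 0 satisfy |P(A ∩ B) − P(A)P(B)| ≤ φ · P(B) for all A ∈ 𝔉₁ and B ∈ 𝔉₂. Let ξ be an 𝔉₁-measurable real random variable with (E|ξ|²)^{1/2} ≤ a and η an 𝔉₂-measurable real random variable with (E|η|²)^{1/2} ≤ b. Then |E(ξη) − E(ξ)E(η)| ≤ C · a · b · φ^{1/2}. -/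
/-!
For `f`, `g` with finitely many values, `Cov(f, g) = ∑ a b c(a, b)` with
`c(a, b) = P(f = a, g = b) - P(f = a) P(g = b)`. Summed over any set of values of `g`
(resp. `f`), `c` becomes the defect of a pair of events, at most `P(f = a)` trivially
(resp. `φ P(g = b)` by mixing); splitting by sign, the absolute row and column sums are at most
`2 P(f = a)` and `2 φ P(g = b)`, and Schur's test gives `|Cov(f, g)| ≤ 2 √φ ‖f‖₂ ‖g‖₂`.
The general case follows by approximating `ξ` and `η` in `L²` by finitely valued functions
measurable for the same σ-algebras, the covariance being continuous on `L²`.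
-/

open MeasureTheory ProbabilityTheory

namespace Finset

theorem sum_abs_le_two_mul_of_forall_subset {ι : Type*} {s : Finset ι} {c : ι → ℝ} {M : ℝ}
    (h : ∀ t ⊆ s, |∑ i ∈ t, c i| ≤ M) : ∑ i ∈ s, |c i| ≤ 2 * M := by
  classical
  have hpos : ∑ i ∈ s with 0 ≤ c i, |c i| = |∑ i ∈ s with 0 ≤ c i, c i| := by
    rw [abs_sum_of_nonneg fun i hi => (mem_filter.1 hi).2]
    exact sum_congr rfl fun i hi => abs_of_nonneg (mem_filter.1 hi).2
  have hneg : ∑ i ∈ s with ¬0 ≤ c i, |c i| = |∑ i ∈ s with ¬0 ≤ c i, c i| := by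
    rw [← abs_neg, ← sum_neg_distrib, abs_sum_of_nonneg fun i hi => ?_]
    · exact sum_congr rfl fun i hi => abs_of_neg (not_le.1 (mem_filter.1 hi).2)
    · exact neg_nonneg.2 (not_le.1 (mem_filter.1 hi).2).le
  rw [← sum_filter_add_sum_filter_not s (fun i => 0 ≤ c i), hpos, hneg, two_mul]
  exact add_le_add (h _ (filter_subset _ _)) (h _ (filter_subset _ _))

/-- Schur's test for a finite bilinear form. -/
theorem sq_sum_sum_mul_mul_le {α β : Type*} (s : Finset α) (t : Finset β) (x : α → ℝ)
    (y : β → ℝ) (c : α → β → ℝ) {R : α → ℝ} {K : β → ℝ}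
    (hR : ∀ a ∈ s, ∑ b ∈ t, |c a b| ≤ R a) (hK : ∀ b ∈ t, ∑ a ∈ s, |c a b| ≤ K b) :
    (∑ a ∈ s, ∑ b ∈ t, x a * y b * c a b) ^ 2 ≤
      (∑ a ∈ s, x a ^ 2 * R a) * ∑ b ∈ t, y b ^ 2 * K b := by
  have hCS : (∑ a ∈ s, ∑ b ∈ t, |x a * y b * c a b|) ^ 2 ≤
      (∑ a ∈ s, ∑ b ∈ t, x a ^ 2 * |c a b|) * ∑ a ∈ s, ∑ b ∈ t, y b ^ 2 * |c a b| := by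
    simp only [← sum_product' s t]
    refine sum_sq_le_sum_mul_sum_of_sq_le_mul _ (fun _ _ => by positivity)
      (fun _ _ => by positivity) fun p _ => le_of_eq ?_
    rw [sq_abs]
    linear_combination (-(x p.1 ^ 2 * y p.2 ^ 2)) * sq_abs (c p.1 p.2)
  have hrow : ∑ a ∈ s, ∑ b ∈ t, x a ^ 2 * |c a b| ≤ ∑ a ∈ s, x a ^ 2 * R a := by
    refine sum_le_sum fun a ha => ?_
    rw [← mul_sum]
    exact mul_le_mul_of_nonneg_left (hR a ha) (sq_nonneg _)
  have hcol : ∑ a ∈ s, ∑ b ∈ t, y b ^ 2 * |c a b| ≤ ∑ b ∈ t, y b ^ 2 * K b := by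
    rw [sum_comm]
    refine sum_le_sum fun b hb => ?_
    rw [← mul_sum]
    exact mul_le_mul_of_nonneg_left (hK b hb) (sq_nonneg _)
  calc (∑ a ∈ s, ∑ b ∈ t, x a * y b * c a b) ^ 2
      ≤ (∑ a ∈ s, ∑ b ∈ t, |x a * y b * c a b|) ^ 2 := by
        rw [← sq_abs]
        refine pow_le_pow_left₀ (abs_nonneg _) ((abs_sum_le_sum_abs _ _).trans ?_) 2
        exact sum_le_sum fun a _ => abs_sum_le_sum_abs _ _
    _ ≤ _ := hCS.trans (mul_le_mul hrow hcol (by positivity) ((sum_nonneg fun _ _ =>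
        sum_nonneg fun _ _ => by positivity).trans hrow))

end Finset

section

variable {Ω : Type*} {mΩ : MeasurableSpace Ω} {P : Measure Ω}

theorem integral_comp_eq_sum_measureReal_preimage_singleton [IsFiniteMeasure P] {α : Type*}
    [MeasurableSpace α] [MeasurableSingletonClass α] {X : Ω → α} (hX : Measurable X)
    {s : Finset α} (hs : ∀ ω, X ω ∈ s) (F : α → ℝ) :
    ∫ ω, F (X ω) ∂P = ∑ x ∈ s, F x * P.real (X ⁻¹' {x}) := by
  have hfiber : ∀ x, MeasurableSet (X ⁻¹' {x}) := fun x => hX (measurableSet_singleton x)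
  have hsplit : (fun ω => F (X ω)) = fun ω => ∑ x ∈ s, (X ⁻¹' {x}).indicator (fun _ => F x) ω := by
    funext ω
    rw [Finset.sum_eq_single_of_mem (X ω) (hs ω) fun x _ hx =>
      Set.indicator_of_notMem (fun h => hx h.symm) _]
    exact (Set.indicator_of_mem rfl _).symm
  rw [hsplit, integral_finsetSum _ fun x _ => (integrable_const _).indicator (hfiber x)]
  exact Finset.sum_congr rfl fun x _ => by
    rw [integral_indicator_const _ (hfiber x), smul_eq_mul, mul_comm]

noncomputable def indepDefect (P : Measure Ω) (E F : Set Ω) : ℝ :=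
  P.real (E ∩ F) - P.real E * P.real F

theorem indepDefect_comm (E F : Set Ω) : indepDefect P E F = indepDefect P F E := by
  rw [indepDefect, indepDefect, Set.inter_comm, mul_comm]

theorem abs_indepDefect_le_left [IsProbabilityMeasure P] (E F : Set Ω) :
    |indepDefect P E F| ≤ P.real E := by
  have hEF : P.real (E ∩ F) ≤ P.real E := measureReal_mono Set.inter_subset_left
  have hprod : P.real E * P.real F ≤ P.real E :=
    mul_le_of_le_one_right measureReal_nonneg measureReal_le_one
  have hprod_nonneg : 0 ≤ P.real E * P.real F := by positivity
  rw [indepDefect, abs_sub_le_iff]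
  constructor <;> linarith [measureReal_nonneg (μ := P) (s := E ∩ F)]

theorem sum_indepDefect_preimage_singleton [IsFiniteMeasure P] {α : Type*} [MeasurableSpace α]
    [MeasurableSingletonClass α] {X : Ω → α} (hX : Measurable X) (s : Finset α) (F : Set Ω) :
    ∑ x ∈ s, indepDefect P (X ⁻¹' {x}) F = indepDefect P (X ⁻¹' s) F := by
  have hfiber : ∀ x ∈ s, MeasurableSet (X ⁻¹' {x}) := fun x _ => hX (measurableSet_singleton x)
  have hinter : ∑ x ∈ s, P.real (X ⁻¹' {x} ∩ F) = P.real (X ⁻¹' s ∩ F) := by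
    simp only [← measureReal_restrict_apply (hX (measurableSet_singleton _)),
      ← measureReal_restrict_apply (hX s.measurableSet)]
    exact sum_measureReal_preimage_singleton s hfiber
  simp only [indepDefect, Finset.sum_sub_distrib, ← Finset.sum_mul, hinter,
    sum_measureReal_preimage_singleton (μ := P) s hfiber]

theorem integral_mul_sub_integral_mul_eq_sum_indepDefect [IsFiniteMeasure P] {f g : Ω → ℝ}
    (hf : Measurable f) (hg : Measurable g) {s t : Finset ℝ} (hs : ∀ ω, f ω ∈ s)
    (ht : ∀ ω, g ω ∈ t) :
    ∫ ω, f ω * g ω ∂P - (∫ ω, f ω ∂P) * ∫ ω, g ω ∂P =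
      ∑ a ∈ s, ∑ b ∈ t, a * b * indepDefect P (f ⁻¹' {a}) (g ⁻¹' {b}) := by
  have hjoint : ∫ ω, f ω * g ω ∂P =
      ∑ a ∈ s, ∑ b ∈ t, a * b * P.real (f ⁻¹' {a} ∩ g ⁻¹' {b}) := by
    rw [integral_comp_eq_sum_measureReal_preimage_singleton (X := fun ω => (f ω, g ω))
      (hf.prodMk hg) (s := s ×ˢ t) (fun ω => Finset.mem_product.2 ⟨hs ω, ht ω⟩)
      (fun p => p.1 * p.2), Finset.sum_product]
    simp only [← Set.singleton_prod_singleton, Set.mk_preimage_prod]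
  have hf_mean : ∫ ω, f ω ∂P = ∑ a ∈ s, a * P.real (f ⁻¹' {a}) :=
    integral_comp_eq_sum_measureReal_preimage_singleton hf hs id
  have hg_mean : ∫ ω, g ω ∂P = ∑ b ∈ t, b * P.real (g ⁻¹' {b}) :=
    integral_comp_eq_sum_measureReal_preimage_singleton hg ht id
  rw [hjoint, hf_mean, hg_mean, Finset.sum_mul_sum, ← Finset.sum_sub_distrib]
  refine Finset.sum_congr rfl fun a _ => ?_
  rw [← Finset.sum_sub_distrib]
  refine Finset.sum_congr rfl fun b _ => ?_
  rw [indepDefect]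
  ring

theorem abs_integral_mul_sub_le_of_finite_range [IsProbabilityMeasure P]
    {𝔉₁ 𝔉₂ : MeasurableSpace Ω} (h₁ : 𝔉₁ ≤ mΩ) (h₂ : 𝔉₂ ≤ mΩ) {φ : ℝ} (hφ : 0 ≤ φ)
    (hmix : ∀ E F, MeasurableSet[𝔉₁] E → MeasurableSet[𝔉₂] F →
      |indepDefect P E F| ≤ φ * P.real F)
    {f g : Ω → ℝ} (hf : Measurable[𝔉₁] f) (hg : Measurable[𝔉₂] g)
    (hf_fin : (Set.range f).Finite) (hg_fin : (Set.range g).Finite) :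
    |∫ ω, f ω * g ω ∂P - (∫ ω, f ω ∂P) * ∫ ω, g ω ∂P| ≤
      2 * √φ * √(∫ ω, f ω ^ 2 ∂P) * √(∫ ω, g ω ^ 2 ∂P) := by
  have hfm : Measurable[mΩ] f := hf.mono h₁ le_rfl
  have hgm : Measurable[mΩ] g := hg.mono h₂ le_rfl
  have hs : ∀ ω, f ω ∈ hf_fin.toFinset := fun ω => hf_fin.mem_toFinset.2 ⟨ω, rfl⟩
  have ht : ∀ ω, g ω ∈ hg_fin.toFinset := fun ω => hg_fin.mem_toFinset.2 ⟨ω, rfl⟩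
  have hrow : ∀ a ∈ hf_fin.toFinset, ∑ b ∈ hg_fin.toFinset,
      |indepDefect P (f ⁻¹' {a}) (g ⁻¹' {b})| ≤ 2 * P.real (f ⁻¹' {a}) := by
    refine fun a _ => Finset.sum_abs_le_two_mul_of_forall_subset fun T _ => ?_
    simp only [indepDefect_comm (f ⁻¹' {a})]
    rw [sum_indepDefect_preimage_singleton hgm, indepDefect_comm]
    exact abs_indepDefect_le_left _ _
  have hcol : ∀ b ∈ hg_fin.toFinset, ∑ a ∈ hf_fin.toFinset,
      |indepDefect P (f ⁻¹' {a}) (g ⁻¹' {b})| ≤ 2 * (φ * P.real (g ⁻¹' {b})) := by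
    refine fun b _ => Finset.sum_abs_le_two_mul_of_forall_subset fun S _ => ?_
    rw [sum_indepDefect_preimage_singleton hfm]
    exact hmix _ _ (hf S.measurableSet) (hg (measurableSet_singleton b))
  have hf_sq : ∫ ω, f ω ^ 2 ∂P = ∑ a ∈ hf_fin.toFinset, a ^ 2 * P.real (f ⁻¹' {a}) :=
    integral_comp_eq_sum_measureReal_preimage_singleton hfm hs (· ^ 2)
  have hg_sq : ∫ ω, g ω ^ 2 ∂P = ∑ b ∈ hg_fin.toFinset, b ^ 2 * P.real (g ⁻¹' {b}) :=
    integral_comp_eq_sum_measureReal_preimage_singleton hgm ht (· ^ 2)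
  have hsq : (∫ ω, f ω * g ω ∂P - (∫ ω, f ω ∂P) * ∫ ω, g ω ∂P) ^ 2 ≤
      (2 * ∫ ω, f ω ^ 2 ∂P) * (2 * (φ * ∫ ω, g ω ^ 2 ∂P)) := by
    rw [integral_mul_sub_integral_mul_eq_sum_indepDefect hfm hgm hs ht, hf_sq, hg_sq,
      Finset.mul_sum, Finset.mul_sum, Finset.mul_sum]
    convert Finset.sq_sum_sum_mul_mul_le _ _ id id _ hrow hcol using 3 <;> simp only [id] <;> ring
  have hf_nonneg : 0 ≤ ∫ ω, f ω ^ 2 ∂P := integral_nonneg fun ω => sq_nonneg _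
  have hg_nonneg : 0 ≤ ∫ ω, g ω ^ 2 ∂P := integral_nonneg fun ω => sq_nonneg _
  refine abs_le_of_sq_le_sq (hsq.trans_eq ?_) (by positivity)
  rw [mul_pow, mul_pow, mul_pow, Real.sq_sqrt hφ, Real.sq_sqrt hf_nonneg, Real.sq_sqrt hg_nonneg]
  ring

theorem abs_integral_mul_le_sqrt_mul_sqrt {u v : Ω → ℝ} (hu : MemLp u 2 P) (hv : MemLp v 2 P) :
    |∫ ω, u ω * v ω ∂P| ≤ √(∫ ω, u ω ^ 2 ∂P) * √(∫ ω, v ω ^ 2 ∂P) := by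
  have hholder := integral_mul_norm_le_Lp_mul_Lq (μ := P) Real.HolderConjugate.two_two
    (by simpa using hu) (by simpa using hv)
  simp only [Real.norm_eq_abs, ← abs_mul, Real.rpow_two, sq_abs, ← Real.sqrt_eq_rpow] at hholder
  exact (abs_integral_le_integral_abs).trans hholder

theorem abs_covariance_le_sqrt_mul_sqrt [IsProbabilityMeasure P] {u v : Ω → ℝ}
    (hu : MemLp u 2 P) (hv : MemLp v 2 P) :
    |cov[u, v; P]| ≤ √(∫ ω, u ω ^ 2 ∂P) * √(∫ ω, v ω ^ 2 ∂P) := by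
  have hvar : ∀ w : Ω → ℝ, MemLp w 2 P →
      √(∫ ω, (w ω - ∫ ω', w ω' ∂P) ^ 2 ∂P) ≤ √(∫ ω, w ω ^ 2 ∂P) := fun w hw => by
    rw [← variance_eq_integral hw.aestronglyMeasurable.aemeasurable]
    exact Real.sqrt_le_sqrt (variance_le_expectation_sq hw.aestronglyMeasurable)
  calc |cov[u, v; P]|
      ≤ √(∫ ω, (u ω - ∫ ω', u ω' ∂P) ^ 2 ∂P) * √(∫ ω, (v ω - ∫ ω', v ω' ∂P) ^ 2 ∂P) :=
        abs_integral_mul_le_sqrt_mul_sqrt (hu.sub (memLp_const _)) (hv.sub (memLp_const _))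
    _ ≤ _ := mul_le_mul (hvar u hu) (hvar v hv) (Real.sqrt_nonneg _) (Real.sqrt_nonneg _)

theorem abs_covariance_sub_covariance_le [IsProbabilityMeasure P] {u v u' v' : Ω → ℝ}
    (hu : MemLp u 2 P) (hv : MemLp v 2 P) (hu' : MemLp u' 2 P) (hv' : MemLp v' 2 P) :
    |cov[u, v; P] - cov[u', v'; P]| ≤
      √(∫ ω, (u ω - u' ω) ^ 2 ∂P) * √(∫ ω, v ω ^ 2 ∂P) +
        √(∫ ω, u' ω ^ 2 ∂P) * √(∫ ω, (v ω - v' ω) ^ 2 ∂P) := by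
  have hsplit : cov[u, v; P] - cov[u', v'; P] =
      cov[fun ω => u ω - u' ω, v; P] + cov[u', fun ω => v ω - v' ω; P] := by
    rw [covariance_fun_sub_left hu hu' hv, covariance_fun_sub_right hu' hv hv']
    ring
  rw [hsplit]
  exact (abs_add_le _ _).trans (add_le_add (abs_covariance_le_sqrt_mul_sqrt (hu.sub hu') hv)
    (abs_covariance_le_sqrt_mul_sqrt hu' (hv.sub hv')))

theorem sqrt_integral_sq_eq_toReal_eLpNorm {u : Ω → ℝ} (hu : MemLp u 2 P) :
    √(∫ ω, u ω ^ 2 ∂P) = (eLpNorm u 2 P).toReal := by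
  rw [hu.eLpNorm_eq_integral_rpow_norm two_ne_zero ENNReal.ofNat_ne_top,
    ENNReal.toReal_ofReal (by positivity), Real.sqrt_eq_rpow]
  simp

theorem MeasureTheory.MemLp.exists_finite_range_sqrt_integral_sq_sub_le [IsFiniteMeasure P]
    {𝔉 : MeasurableSpace Ω} (h𝔉 : 𝔉 ≤ mΩ) {u : Ω → ℝ} (hu : MemLp u 2 P)
    (hu𝔉 : Measurable[𝔉] u) {ε : ℝ} (hε : 0 < ε) :
    ∃ f : Ω → ℝ, Measurable[𝔉] f ∧ (Set.range f).Finite ∧ MemLp f 2 P ∧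
      √(∫ ω, (u ω - f ω) ^ 2 ∂P) ≤ ε ∧ √(∫ ω, f ω ^ 2 ∂P) ≤ √(∫ ω, u ω ^ 2 ∂P) + ε := by
  have hu_trim : MemLp u 2 (P.trim h𝔉) := by
    refine ⟨hu𝔉.stronglyMeasurable.aestronglyMeasurable, ?_⟩
    rw [eLpNorm_trim h𝔉 hu𝔉.stronglyMeasurable]
    exact hu.2
  obtain ⟨f, hf_lt, hf_trim⟩ := hu_trim.exists_simpleFunc_eLpNorm_sub_lt ENNReal.ofNat_ne_top
    (ENNReal.ofReal_pos.2 hε).ne'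
  have hf : MemLp f 2 P := memLp_of_memLp_trim h𝔉 hf_trim
  rw [eLpNorm_trim h𝔉 (hu𝔉.stronglyMeasurable.sub f.stronglyMeasurable)] at hf_lt
  have hsub : (eLpNorm (u - ⇑f) 2 P).toReal ≤ ε := ENNReal.toReal_le_of_le_ofReal hε.le hf_lt.le
  refine ⟨f, f.measurable, f.finite_range, hf,
    (sqrt_integral_sq_eq_toReal_eLpNorm (hu.sub hf)).trans_le hsub, ?_⟩
  rw [sqrt_integral_sq_eq_toReal_eLpNorm hf, sqrt_integral_sq_eq_toReal_eLpNorm hu]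
  have htri : eLpNorm f 2 P ≤ eLpNorm u 2 P + eLpNorm (u - ⇑f) 2 P := by
    simpa using eLpNorm_sub_le hu.aestronglyMeasurable (hu.sub hf).aestronglyMeasurable one_le_two
  calc (eLpNorm f 2 P).toReal ≤ (eLpNorm u 2 P).toReal + (eLpNorm (u - ⇑f) 2 P).toReal :=
        ENNReal.toReal_le_add htri hu.eLpNorm_ne_top (hu.sub hf).eLpNorm_ne_top
    _ ≤ _ := add_le_add_right hsub _

theorem abs_covariance_le_of_mixing [IsProbabilityMeasure P]
    {𝔉₁ 𝔉₂ : MeasurableSpace Ω} (h₁ : 𝔉₁ ≤ mΩ) (h₂ : 𝔉₂ ≤ mΩ) {φ : ℝ} (hφ : 0 ≤ φ)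
    (hmix : ∀ E F, MeasurableSet[𝔉₁] E → MeasurableSet[𝔉₂] F →
      |indepDefect P E F| ≤ φ * P.real F)
    {ξ η : Ω → ℝ} (hξ : Measurable[𝔉₁] ξ) (hη : Measurable[𝔉₂] η)
    (hξ₂ : MemLp ξ 2 P) (hη₂ : MemLp η 2 P) :
    |cov[ξ, η; P]| ≤ 2 * √φ * √(∫ ω, ξ ω ^ 2 ∂P) * √(∫ ω, η ω ^ 2 ∂P) := by
  set A := √(∫ ω, ξ ω ^ 2 ∂P)
  set B := √(∫ ω, η ω ^ 2 ∂P)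
  set bound : ℝ → ℝ := fun ε => 2 * √φ * (A + ε) * (B + ε) + ε * B + (A + ε) * ε
  have happrox : ∀ ε > 0, |cov[ξ, η; P]| ≤ bound ε := fun ε hε => by
    obtain ⟨f, hf, hf_fin, hf₂, hξf, hf_le⟩ :=
      hξ₂.exists_finite_range_sqrt_integral_sq_sub_le h₁ hξ hε
    obtain ⟨g, hg, hg_fin, hg₂, hηg, hg_le⟩ :=
      hη₂.exists_finite_range_sqrt_integral_sq_sub_le h₂ hη hε
    have hfg : |cov[f, g; P]| ≤ 2 * √φ * (A + ε) * (B + ε) := by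
      rw [covariance_eq_sub hf₂ hg₂]
      refine (abs_integral_mul_sub_le_of_finite_range h₁ h₂ hφ hmix hf hg hf_fin hg_fin).trans ?_
      gcongr
    have hdiff := abs_covariance_sub_covariance_le hξ₂ hη₂ hf₂ hg₂
    have hB : 0 ≤ B := Real.sqrt_nonneg _
    have hξf_B : √(∫ ω, (ξ ω - f ω) ^ 2 ∂P) * B ≤ ε * B := mul_le_mul_of_nonneg_right hξf hB
    have hf_ηg : √(∫ ω, f ω ^ 2 ∂P) * √(∫ ω, (η ω - g ω) ^ 2 ∂P) ≤ (A + ε) * ε :=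
      mul_le_mul hf_le hηg (Real.sqrt_nonneg _) (by positivity)
    linarith [abs_sub_abs_le_abs_sub cov[ξ, η; P] cov[f, g; P]]
  have hlim : Filter.Tendsto bound (nhdsWithin 0 (Set.Ioi 0)) (nhds (bound 0)) :=
    ((by fun_prop : Continuous bound).tendsto 0).mono_left nhdsWithin_le_nhds
  have := ge_of_tendsto hlim (eventually_nhdsWithin_of_forall happrox)
  simpa [bound] using this

end

/-- Lemma `il` (i) of the paper (Ibragimov–Linnik, Lemma 17.2.3): there is a universal
constant `C > 0` such that for any probability space, sub-σ-algebras `𝔉₁, 𝔉₂` with uniform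
mixing coefficient at most `φ`, and square-integrable `ξ, η` measurable w.r.t. `𝔉₁, 𝔉₂`
with `(E|ξ|²)^{1/2} ≤ a`, `(E|η|²)^{1/2} ≤ b`, one has
`|E(ξη) - EξEη| ≤ C a b φ^{1/2}`. -/
theorem mixing_covariance_bound_L2 :
    ∃ C : ℝ, 0 < C ∧
      ∀ (Ω : Type) [mΩ : MeasurableSpace Ω] (P : Measure Ω),
        IsProbabilityMeasure P →
        ∀ (𝔉₁ 𝔉₂ : MeasurableSpace Ω), 𝔉₁ ≤ mΩ → 𝔉₂ ≤ mΩ →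
        ∀ (φ : ℝ), 0 ≤ φ →
        (∀ A B : Set Ω, MeasurableSet[𝔉₁] A → MeasurableSet[𝔉₂] B →
          |(P (A ∩ B)).toReal - (P A).toReal * (P B).toReal| ≤ φ * (P B).toReal) →
        ∀ (ξ η : Ω → ℝ) (a b : ℝ),
          Measurable[𝔉₁] ξ → Measurable[𝔉₂] η →
          MemLp ξ 2 P → MemLp η 2 P →
          Real.sqrt (∫ ω, ξ ω ^ 2 ∂P) ≤ a → Real.sqrt (∫ ω, η ω ^ 2 ∂P) ≤ b →
          |(∫ ω, ξ ω * η ω ∂P) - (∫ ω, ξ ω ∂P) * (∫ ω, η ω ∂P)| ≤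
            C * a * b * Real.sqrt φ := by
  refine ⟨2, two_pos, fun Ω mΩ P hP 𝔉₁ 𝔉₂ h₁ h₂ φ hφ hmix ξ η a b hξ hη hξ₂ hη₂ ha hb => ?_⟩
  have hcov := abs_covariance_le_of_mixing h₁ h₂ hφ hmix hξ hη hξ₂ hη₂
  rw [covariance_eq_sub hξ₂ hη₂] at hcov
  have ha₀ : 0 ≤ a := (Real.sqrt_nonneg _).trans ha
  calc _ ≤ 2 * √φ * √(∫ ω, ξ ω ^ 2 ∂P) * √(∫ ω, η ω ^ 2 ∂P) := hcov
    _ ≤ 2 * √φ * a * b := by gcongr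
    _ = 2 * a * b * √φ := by ring
end

section
/- There is a universal constant C > 0 with the following property. Let (Ω, Σ, P) be a probability space, let 𝔉₁, 𝔉₂ ⊆ Σ be sub-σ-algebras, and let φ ≥ 0 satisfy |P(A ∩ B) − P(A)P(B)| ≤ φ · P(B) for all A ∈ 𝔉₁ and B ∈ 𝔉₂. Let ξ be an 𝔉₁-measurable real random variable with |ξ| ≤ a almost surely and η an 𝔉₂-measurable real random variable with |η| ≤ b almost surely. Then |E(ξη) − E(ξ)E(η)| ≤ C · a · b · φ. -/
/-!
If the integrals of `g` over all `m`-measurable sets are bounded by `K`, then splitting at the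
sign of `μ[g|m]` shows `‖μ[g|m]‖₁ ≤ 2K`, so `|∫ f g| = |∫ f μ[g|m]| ≤ 2KM` for every
`m`-measurable `f` with `|f| ≤ M`. Since `∫_B (ξ - 𝔼ξ) = ∫ ξ (𝟙_B - P(B))` and the mixing
condition bounds the integrals of `𝟙_B - P(B)` over `𝔉₁`-sets by `φ`, the first application
gives `|∫_B (ξ - 𝔼ξ)| ≤ 2aφ` for `B ∈ 𝔉₂`; the second, with `f = η` and `g = ξ - 𝔼ξ`, bounds
the covariance `∫ η (ξ - 𝔼ξ)` by `4abφ`.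
-/

open MeasureTheory

namespace MeasureTheory

variable {Ω : Type*} {m m₀ : MeasurableSpace Ω} {μ : Measure Ω}

lemma integral_abs_condExp_le_of_abs_setIntegral_le (hm : m ≤ m₀) [SigmaFinite (μ.trim hm)]
    {g : Ω → ℝ} {K : ℝ} (hK : ∀ s, MeasurableSet[m] s → |∫ x in s, g x ∂μ| ≤ K) :
    ∫ x, |μ[g|m] x| ∂μ ≤ 2 * K := by
  have hK₀ : 0 ≤ K := by simpa using hK ∅ (@MeasurableSet.empty _ m)
  by_cases hg : Integrable g μ
  swap
  · simpa [condExp_of_not_integrable hg] using hK₀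
  set s := {x | 0 ≤ μ[g|m] x}
  have hs : MeasurableSet[m] s :=
    measurableSet_le measurable_const stronglyMeasurable_condExp.measurable
  have hpos : ∫ x in s, |μ[g|m] x| ∂μ = ∫ x in s, g x ∂μ := by
    rw [← setIntegral_condExp hm hg hs]
    exact setIntegral_congr_fun (hm s hs) fun x hx => abs_of_nonneg hx
  have hneg : ∫ x in sᶜ, |μ[g|m] x| ∂μ = -∫ x in sᶜ, g x ∂μ := by
    rw [← setIntegral_condExp hm hg hs.compl, ← integral_neg]
    exact setIntegral_congr_fun (hm _ hs.compl) fun x hx => abs_of_neg (not_le.mp hx)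
  rw [← integral_add_compl (hm s hs) integrable_condExp.abs, hpos, hneg]
  linarith [le_abs_self (∫ x in s, g x ∂μ), neg_abs_le (∫ x in sᶜ, g x ∂μ), hK s hs,
    hK sᶜ hs.compl]

lemma abs_integral_mul_le_of_abs_setIntegral_le (hm : m ≤ m₀) [SigmaFinite (μ.trim hm)]
    {f g : Ω → ℝ} {M K : ℝ} (hM : 0 ≤ M) (hf : StronglyMeasurable[m] f)
    (hfM : ∀ᵐ x ∂μ, |f x| ≤ M) (hg : Integrable g μ)
    (hK : ∀ s, MeasurableSet[m] s → |∫ x in s, g x ∂μ| ≤ K) :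
    |∫ x, f x * g x ∂μ| ≤ 2 * K * M := by
  have hfg : Integrable (f * g) μ := hg.bdd_mul (hf.mono hm).aestronglyMeasurable hfM
  calc |∫ x, f x * g x ∂μ| = |∫ x, μ[f * g|m] x ∂μ| := by rw [integral_condExp hm]; rfl
    _ = |∫ x, f x * μ[g|m] x ∂μ| := by
        rw [integral_congr_ae (condExp_mul_of_stronglyMeasurable_left hf hfg hg)]; rfl
    _ ≤ ∫ x, M * |μ[g|m] x| ∂μ := by
        refine norm_integral_le_of_norm_le (G := ℝ) (integrable_condExp.abs.const_mul M) ?_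
        filter_upwards [hfM] with x hx
        rw [Real.norm_eq_abs, abs_mul]
        exact mul_le_mul_of_nonneg_right hx (abs_nonneg _)
    _ = M * ∫ x, |μ[g|m] x| ∂μ := integral_const_mul M _
    _ ≤ M * (2 * K) :=
        mul_le_mul_of_nonneg_left (integral_abs_condExp_le_of_abs_setIntegral_le hm hK) hM
    _ = 2 * K * M := by ring

lemma abs_setIntegral_sub_integral_le_of_mixing [IsFiniteMeasure μ] (hm : m ≤ m₀)
    {ξ : Ω → ℝ} {a φ : ℝ} (ha : 0 ≤ a) (hξ : StronglyMeasurable[m] ξ)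
    (hξa : ∀ᵐ x ∂μ, |ξ x| ≤ a) {B : Set Ω} (hB : MeasurableSet B)
    (hmix : ∀ A, MeasurableSet[m] A → |μ.real (A ∩ B) - μ.real A * μ.real B| ≤ φ * μ.real B) :
    |∫ x in B, (ξ x - ∫ y, ξ y ∂μ) ∂μ| ≤ 2 * (φ * μ.real B) * a := by
  have hξi : Integrable ξ μ := .of_bound (hξ.mono hm).aestronglyMeasurable a hξa
  have hind : Integrable (B.indicator 1) μ := (integrable_const (1 : ℝ)).indicator hB
  have hK : ∀ A, MeasurableSet[m] A →
      |∫ x in A, (B.indicator 1 x - μ.real B) ∂μ| ≤ φ * μ.real B := by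
    intro A hA
    rw [integral_sub hind.integrableOn (integrable_const _), setIntegral_indicator hB]
    simpa using hmix A hA
  have hrepr : ∫ x in B, (ξ x - ∫ y, ξ y ∂μ) ∂μ =
      ∫ x, ξ x * (B.indicator 1 x - μ.real B) ∂μ := by
    have : ∀ x, ξ x * (B.indicator 1 x - μ.real B) = B.indicator ξ x - μ.real B * ξ x := by
      intro x
      by_cases hx : x ∈ B <;> simp [hx] <;> ring
    rw [integral_congr_ae (.of_forall this), integral_sub (hξi.indicator hB) (hξi.const_mul _),
      integral_indicator hB, integral_const_mul,
      integral_sub hξi.integrableOn (integrable_const _), setIntegral_const, smul_eq_mul]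
  rw [hrepr]
  exact abs_integral_mul_le_of_abs_setIntegral_le hm ha hξ hξa (hind.sub (integrable_const _)) hK

end MeasureTheory

/-- Lemma `il` (ii) of the paper: there is a universal constant `C > 0` such that for any
probability space, sub-σ-algebras `𝔉₁, 𝔉₂` with uniform mixing coefficient at most `φ`,
and a.s. bounded `ξ, η` measurable w.r.t. `𝔉₁, 𝔉₂` with `|ξ| ≤ a`, `|η| ≤ b` a.s., one has
`|E(ξη) - EξEη| ≤ C a b φ`. -/
theorem mixing_covariance_bound_bounded :
    ∃ C : ℝ, 0 < C ∧
      ∀ (Ω : Type) [mΩ : MeasurableSpace Ω] (P : Measure Ω),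
        IsProbabilityMeasure P →
        ∀ (𝔉₁ 𝔉₂ : MeasurableSpace Ω), 𝔉₁ ≤ mΩ → 𝔉₂ ≤ mΩ →
        ∀ (φ : ℝ), 0 ≤ φ →
        (∀ A B : Set Ω, MeasurableSet[𝔉₁] A → MeasurableSet[𝔉₂] B →
          |(P (A ∩ B)).toReal - (P A).toReal * (P B).toReal| ≤ φ * (P B).toReal) →
        ∀ (ξ η : Ω → ℝ) (a b : ℝ),
          Measurable[𝔉₁] ξ → Measurable[𝔉₂] η →
          (∀ᵐ ω ∂P, |ξ ω| ≤ a) → (∀ᵐ ω ∂P, |η ω| ≤ b) →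
          |(∫ ω, ξ ω * η ω ∂P) - (∫ ω, ξ ω ∂P) * (∫ ω, η ω ∂P)| ≤ C * a * b * φ := by
  refine ⟨4, by norm_num, ?_⟩
  intro Ω mΩ P hP 𝔉₁ 𝔉₂ h₁ h₂ φ hφ hmix ξ η a b hξ hη hξa hηb
  have ha : 0 ≤ a := (abs_nonneg _).trans hξa.exists.choose_spec
  have hb : 0 ≤ b := (abs_nonneg _).trans hηb.exists.choose_spec
  have hξi : Integrable ξ P := .of_bound (hξ.mono h₁ le_rfl).aestronglyMeasurable a hξa
  have hηi : Integrable η P := .of_bound (hη.mono h₂ le_rfl).aestronglyMeasurable b hηb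
  have hK : ∀ B, MeasurableSet[𝔉₂] B → |∫ x in B, (ξ x - ∫ y, ξ y ∂P) ∂P| ≤ 2 * φ * a :=
    fun B hB => (abs_setIntegral_sub_integral_le_of_mixing h₁ ha hξ.stronglyMeasurable hξa
      (h₂ B hB) fun A hA => hmix A B hA hB).trans
        (by gcongr; exact mul_le_of_le_one_right hφ measureReal_le_one)
  have hcov : ∫ x, η x * (ξ x - ∫ y, ξ y ∂P) ∂P =
      (∫ x, ξ x * η x ∂P) - (∫ x, ξ x ∂P) * ∫ x, η x ∂P := by
    simp_rw [mul_sub, mul_comm (η _)]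
    rw [integral_sub (hηi.bdd_mul (hξ.mono h₁ le_rfl).aestronglyMeasurable hξa)
      (hηi.const_mul _), integral_const_mul]
  rw [← hcov]
  calc _ ≤ 2 * (2 * φ * a) * b := abs_integral_mul_le_of_abs_setIntegral_le h₂ hb
        hη.stronglyMeasurable hηb (hξi.sub (integrable_const _)) hK
    _ = 4 * a * b * φ := by ring
end

section
/- There is a universal constant C > 0 with the following property. Let (Ω, Σ, P) be a probability space, N ≥ 1, and 𝔉₁, …, 𝔉_N ⊆ Σ sub-σ-algebras. Let φ ≥ 0 be such that for each k = 1, …, N−1, |P(A ∩ B) − P(A)P(B)| ≤ φ · P(B) holds for all A ∈ 𝔉_k and all B in the σ-algebra generated by 𝔉_{k+1} ∪ ⋯ ∪ 𝔉_N. Let ξ₁, …, ξ_N be real random variables with each ξ_k being 𝔉_k-measurable. Then | E( ∏_{k=1}^{N} e^{i ξ_k} ) − ∏_{k=1}^{N} E( e^{i ξ_k} ) | ≤ C · (N − 1) · φ. -/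
/-!
The layer-cake formula turns the set inequality `|P(A ∩ B) - P(A) P(B)| ≤ φ P(B)` into the
covariance bound `|Cov(f, g)| ≤ φ` for `[0, 1]`-valued `f`, `g` measurable with respect to the two
σ-algebras: first for `g` an indicator, then for general `g` by a second layer-cake decomposition
against the measure with density `f`. An affine change gives `4φ` for `[-1, 1]`-valued functions
and splitting into real and imaginary parts `16φ` for complex functions of modulus at most `1`.
Since `E(Z₁ W) - E Z₁ E W` is such a covariance for `W = Z₂ ⋯ Z_N`, which is measurable with
respect to the later σ-algebras, induction on `N` telescopes the product with `C = 16`.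
-/

open MeasureTheory ProbabilityTheory Set
open scoped ENNReal

section LayerCake

variable {Ω : Type*} [MeasurableSpace Ω] {μ ν : Measure Ω} {f : Ω → ℝ}

theorem lintegral_ofReal_le_add_of_meas_lt_le (hf : Measurable f) (hf0 : ∀ ω, 0 ≤ f ω)
    (hf1 : ∀ ω, f ω ≤ 1) {c : ℝ≥0∞}
    (h : ∀ t, μ {ω | t < f ω} ≤ ν {ω | t < f ω} + c) :
    ∫⁻ ω, ENNReal.ofReal (f ω) ∂μ ≤ ∫⁻ ω, ENNReal.ofReal (f ω) ∂ν + c := by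
  have hmeas : Measurable fun t : ℝ => ν {ω | t < f ω} :=
    Antitone.measurable fun t₁ t₂ h => measure_mono fun ω hω => h.trans_lt hω
  rw [lintegral_eq_lintegral_meas_lt μ (ae_of_all _ hf0) hf.aemeasurable,
    lintegral_eq_lintegral_meas_lt ν (ae_of_all _ hf0) hf.aemeasurable]
  calc ∫⁻ t in Ioi 0, μ {ω | t < f ω}
      ≤ ∫⁻ t in Ioi 0, (ν {ω | t < f ω} + (Ioc 0 1).indicator (fun _ => c) t) := by
        refine setLIntegral_mono' measurableSet_Ioi fun t ht => ?_
        by_cases ht1 : t ≤ 1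
        · simpa [indicator_of_mem (mem_Ioc.2 ⟨ht, ht1⟩)] using h t
        · have : {ω | t < f ω} = ∅ :=
            eq_empty_of_forall_notMem fun ω hω => ht1 ((hf1 ω).trans' hω.le)
          simp [this]
    _ = (∫⁻ t in Ioi 0, ν {ω | t < f ω}) + c := by
        rw [lintegral_add_left hmeas, lintegral_indicator_const measurableSet_Ioc,
          Measure.restrict_apply measurableSet_Ioc,
          inter_eq_self_of_subset_left Ioc_subset_Ioi_self]
        simp

theorem integral_le_integral_add_of_measureReal_lt_le [IsFiniteMeasure μ] [IsFiniteMeasure ν]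
    (hf : Measurable f) (hf0 : ∀ ω, 0 ≤ f ω) (hf1 : ∀ ω, f ω ≤ 1) {c : ℝ} (hc : 0 ≤ c)
    (h : ∀ t, μ.real {ω | t < f ω} ≤ ν.real {ω | t < f ω} + c) :
    ∫ ω, f ω ∂μ ≤ ∫ ω, f ω ∂ν + c := by
  have hfin : ∀ (ρ : Measure Ω) [IsFiniteMeasure ρ], ∫⁻ ω, ENNReal.ofReal (f ω) ∂ρ ≠ ∞ :=
    fun ρ _ => ((lintegral_mono fun ω => ENNReal.ofReal_le_one.2 (hf1 ω)).trans_lt (by simp)).ne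
  have key := lintegral_ofReal_le_add_of_meas_lt_le (μ := μ) (ν := ν) hf hf0 hf1
    (c := ENNReal.ofReal c) fun t => by
      rw [← ofReal_measureReal, ← ofReal_measureReal, ← ENNReal.ofReal_add measureReal_nonneg hc]
      exact ENNReal.ofReal_le_ofReal (h t)
  rw [integral_eq_lintegral_of_nonneg_ae (ae_of_all _ hf0) hf.aestronglyMeasurable,
    integral_eq_lintegral_of_nonneg_ae (ae_of_all _ hf0) hf.aestronglyMeasurable,
    ← ENNReal.toReal_ofReal hc, ← ENNReal.toReal_add (hfin ν) ENNReal.ofReal_ne_top]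
  exact ENNReal.toReal_mono (by finiteness [hfin ν]) key

theorem abs_integral_sub_integral_le_of_abs_measureReal_lt_sub_le [IsFiniteMeasure μ]
    [IsFiniteMeasure ν] (hf : Measurable f) (hf0 : ∀ ω, 0 ≤ f ω) (hf1 : ∀ ω, f ω ≤ 1) {c : ℝ}
    (h : ∀ t, |μ.real {ω | t < f ω} - ν.real {ω | t < f ω}| ≤ c) :
    |∫ ω, f ω ∂μ - ∫ ω, f ω ∂ν| ≤ c := by
  have hc : 0 ≤ c := (abs_nonneg _).trans (h 0)
  rw [abs_sub_le_iff]
  constructor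
  · have := integral_le_integral_add_of_measureReal_lt_le hf hf0 hf1 hc fun t =>
      (sub_le_iff_le_add'.1 (abs_sub_le_iff.1 (h t)).1)
    linarith
  · have := integral_le_integral_add_of_measureReal_lt_le (μ := ν) (ν := μ) hf hf0 hf1 hc fun t =>
      (sub_le_iff_le_add'.1 (abs_sub_le_iff.1 (h t)).2)
    linarith

end LayerCake

section ComplexCovariance

variable {Ω : Type*} [MeasurableSpace Ω] {P : Measure Ω} [IsProbabilityMeasure P]

theorem norm_integral_mul_sub_mul_integral_le {X Y : Ω → ℂ} (hX : MemLp X 2 P)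
    (hY : MemLp Y 2 P) :
    ‖∫ ω, X ω * Y ω ∂P - (∫ ω, X ω ∂P) * ∫ ω, Y ω ∂P‖ ≤
      |cov[fun ω => (X ω).re, fun ω => (Y ω).re; P]| +
        |cov[fun ω => (X ω).im, fun ω => (Y ω).im; P]| +
      (|cov[fun ω => (X ω).re, fun ω => (Y ω).im; P]| +
        |cov[fun ω => (X ω).im, fun ω => (Y ω).re; P]|) := by
  have hXr := hX.re; have hXi := hX.im; have hYr := hY.re; have hYi := hY.im
  simp only [RCLike.re_to_complex, RCLike.im_to_complex] at hXr hXi hYr hYi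
  have hre {f : Ω → ℂ} (hf : Integrable f P) : (∫ ω, f ω ∂P).re = ∫ ω, (f ω).re ∂P :=
    (integral_re hf).symm
  have him {f : Ω → ℂ} (hf : Integrable f P) : (∫ ω, f ω ∂P).im = ∫ ω, (f ω).im ∂P :=
    (integral_im hf).symm
  have hXYi : Integrable (fun ω => X ω * Y ω) P := hX.integrable_mul hY
  have hmul {f g : Ω → ℝ} (hf : MemLp f 2 P) (hg : MemLp g 2 P) :
      Integrable (fun ω => f ω * g ω) P :=
    hf.integrable_mul hg
  have hXi1 := hX.integrable one_le_two
  have hYi1 := hY.integrable one_le_two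
  have h_re : (∫ ω, X ω * Y ω ∂P - (∫ ω, X ω ∂P) * ∫ ω, Y ω ∂P).re =
      cov[fun ω => (X ω).re, fun ω => (Y ω).re; P] -
        cov[fun ω => (X ω).im, fun ω => (Y ω).im; P] := by
    rw [covariance_eq_sub hXr hYr, covariance_eq_sub hXi hYi, Complex.sub_re, Complex.mul_re,
      hre hXYi, hre hXi1, hre hYi1, him hXi1, him hYi1]
    simp only [Complex.mul_re, Pi.mul_apply]
    rw [integral_sub (hmul hXr hYr) (hmul hXi hYi)]
    ring
  have h_im : (∫ ω, X ω * Y ω ∂P - (∫ ω, X ω ∂P) * ∫ ω, Y ω ∂P).im =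
      cov[fun ω => (X ω).re, fun ω => (Y ω).im; P] +
        cov[fun ω => (X ω).im, fun ω => (Y ω).re; P] := by
    rw [covariance_eq_sub hXr hYi, covariance_eq_sub hXi hYr, Complex.sub_im, Complex.mul_im,
      him hXYi, hre hXi1, hre hYi1, him hXi1, him hYi1]
    simp only [Complex.mul_im, Pi.mul_apply]
    rw [integral_add (hmul hXr hYi) (hmul hXi hYr)]
    ring
  refine (Complex.norm_le_abs_re_add_abs_im _).trans ?_
  rw [h_re, h_im]
  exact add_le_add (abs_sub _ _) (abs_add_le _ _)

end ComplexCovariance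

section Mixing

variable {Ω : Type*} {m₁ m₂ m₂' : MeasurableSpace Ω} [mΩ : MeasurableSpace Ω]

/-- The uniform (`φ`-)mixing coefficient of `m₁` against `m₂` under `P` is at most `φ`. -/
def PhiMixingLE (P : Measure Ω) (m₁ m₂ : MeasurableSpace Ω) (φ : ℝ) : Prop :=
  ∀ A B, MeasurableSet[m₁] A → MeasurableSet[m₂] B →
    |P.real (A ∩ B) - P.real A * P.real B| ≤ φ * P.real B

namespace PhiMixingLE

variable {P : Measure Ω} {φ : ℝ}

theorem nonneg [IsProbabilityMeasure P] (hmix : PhiMixingLE P m₁ m₂ φ) : 0 ≤ φ := by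
  simpa using hmix univ univ MeasurableSet.univ MeasurableSet.univ

theorem abs_setIntegral_sub_le [IsFiniteMeasure P] (hmix : PhiMixingLE P m₁ m₂ φ)
    (hm₁ : m₁ ≤ mΩ) {f : Ω → ℝ} (hf : Measurable[m₁] f) (hf0 : ∀ ω, 0 ≤ f ω)
    (hf1 : ∀ ω, f ω ≤ 1) {B : Set Ω} (hB : MeasurableSet[m₂] B) :
    |∫ ω in B, f ω ∂P - P.real B * ∫ ω, f ω ∂P| ≤ φ * P.real B := by
  have := P.smul_finite (measure_ne_top P B)
  have h := abs_integral_sub_integral_le_of_abs_measureReal_lt_sub_le (μ := P.restrict B)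
    (ν := P B • P) (hf.mono hm₁ le_rfl) hf0 hf1 fun t => by
      rw [measureReal_restrict_apply (hm₁ _ (measurableSet_lt measurable_const hf)),
        measureReal_ennreal_smul_apply, ← measureReal_def, mul_comm]
      exact hmix _ _ (measurableSet_lt measurable_const hf) hB
  rwa [integral_smul_measure, ← measureReal_def, smul_eq_mul] at h

theorem abs_covariance_le [IsProbabilityMeasure P] (hmix : PhiMixingLE P m₁ m₂ φ)
    (hm₁ : m₁ ≤ mΩ) (hm₂ : m₂ ≤ mΩ) {f g : Ω → ℝ}
    (hf : Measurable[m₁] f) (hf0 : ∀ ω, 0 ≤ f ω) (hf1 : ∀ ω, f ω ≤ 1)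
    (hg : Measurable[m₂] g) (hg0 : ∀ ω, 0 ≤ g ω) (hg1 : ∀ ω, g ω ≤ 1) :
    |cov[f, g; P]| ≤ φ := by
  have hfm : Measurable f := hf.mono hm₁ le_rfl
  have hgm : Measurable g := hg.mono hm₂ le_rfl
  have hfL : MemLp f 2 P := .of_bound hfm.aestronglyMeasurable 1
    (ae_of_all _ fun ω => by simp [abs_of_nonneg (hf0 ω), hf1 ω])
  have hgL : MemLp g 2 P := .of_bound hgm.aestronglyMeasurable 1
    (ae_of_all _ fun ω => by simp [abs_of_nonneg (hg0 ω), hg1 ω])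
  have hF : Measurable fun ω => ENNReal.ofReal (f ω) := ENNReal.measurable_ofReal.comp hfm
  have hFtop : ∀ ω, ENNReal.ofReal (f ω) < ∞ := fun ω => ENNReal.ofReal_lt_top
  have := isFiniteMeasure_withDensity_ofReal (hfL.integrable one_le_two).hasFiniteIntegral
  have := P.smul_finite (ENNReal.ofReal_ne_top (r := ∫ ω, f ω ∂P))
  have h := abs_integral_sub_integral_le_of_abs_measureReal_lt_sub_le
    (μ := P.withDensity fun ω => ENNReal.ofReal (f ω)) (ν := ENNReal.ofReal (∫ ω, f ω ∂P) • P)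
    hgm hg0 hg1 (c := φ) fun t => by
      have hS := measurableSet_lt (measurable_const (a := t)) hg
      rw [measureReal_def, withDensity_apply _ (hm₂ _ hS), ← integral_eq_lintegral_of_nonneg_ae
        (ae_of_all _ hf0) hfm.aestronglyMeasurable, measureReal_ennreal_smul_apply,
        ENNReal.toReal_ofReal (integral_nonneg hf0), mul_comm]
      exact (hmix.abs_setIntegral_sub_le hm₁ hf hf0 hf1 hS).trans
        (mul_le_of_le_one_right hmix.nonneg measureReal_le_one)
  rw [integral_withDensity_eq_integral_toReal_smul hF (ae_of_all _ hFtop), integral_smul_measure,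
    ENNReal.toReal_ofReal (integral_nonneg hf0)] at h
  simp only [ENNReal.toReal_ofReal (hf0 _), smul_eq_mul] at h
  rwa [covariance_eq_sub hfL hgL]

theorem mono_right (hmix : PhiMixingLE P m₁ m₂ φ) (h : m₂' ≤ m₂) :
    PhiMixingLE P m₁ m₂' φ :=
  fun A B hA hB => hmix A B hA (h B hB)

theorem abs_covariance_le_of_abs_le_one [IsProbabilityMeasure P] (hmix : PhiMixingLE P m₁ m₂ φ)
    (hm₁ : m₁ ≤ mΩ) (hm₂ : m₂ ≤ mΩ) {u s : Ω → ℝ} (hu : Measurable[m₁] u)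
    (hu1 : ∀ ω, |u ω| ≤ 1) (hs : Measurable[m₂] s) (hs1 : ∀ ω, |s ω| ≤ 1) :
    |cov[u, s; P]| ≤ 4 * φ := by
  have hui : Integrable u P :=
    .of_bound (hu.mono hm₁ le_rfl).aestronglyMeasurable 1 (ae_of_all _ hu1)
  have hsi : Integrable s P :=
    .of_bound (hs.mono hm₂ le_rfl).aestronglyMeasurable 1 (ae_of_all _ hs1)
  have key := hmix.abs_covariance_le hm₁ hm₂ (f := fun ω => (u ω + 1) / 2)
    (g := fun ω => (s ω + 1) / 2) ((hu.add_const 1).div_const 2)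
    (fun ω => by linarith [abs_le.1 (hu1 ω)]) (fun ω => by linarith [abs_le.1 (hu1 ω)])
    ((hs.add_const 1).div_const 2)
    (fun ω => by linarith [abs_le.1 (hs1 ω)]) (fun ω => by linarith [abs_le.1 (hs1 ω)])
  rw [covariance_fun_div_left, covariance_fun_div_right, covariance_add_const_left hui,
    covariance_add_const_right hsi, abs_div, abs_div] at key
  norm_num at key
  linarith

theorem norm_integral_mul_sub_le [IsProbabilityMeasure P] (hmix : PhiMixingLE P m₁ m₂ φ)
    (hm₁ : m₁ ≤ mΩ) (hm₂ : m₂ ≤ mΩ) {X Y : Ω → ℂ} (hX : Measurable[m₁] X)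
    (hX1 : ∀ ω, ‖X ω‖ ≤ 1) (hY : Measurable[m₂] Y) (hY1 : ∀ ω, ‖Y ω‖ ≤ 1) :
    ‖∫ ω, X ω * Y ω ∂P - (∫ ω, X ω ∂P) * ∫ ω, Y ω ∂P‖ ≤ 16 * φ := by
  have hXL : MemLp X 2 P :=
    .of_bound (hX.mono hm₁ le_rfl).aestronglyMeasurable 1 (ae_of_all _ hX1)
  have hYL : MemLp Y 2 P :=
    .of_bound (hY.mono hm₂ le_rfl).aestronglyMeasurable 1 (ae_of_all _ hY1)
  have hre {Z : Ω → ℂ} (hZ1 : ∀ ω, ‖Z ω‖ ≤ 1) (ω : Ω) : |(Z ω).re| ≤ 1 :=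
    (Complex.abs_re_le_norm _).trans (hZ1 ω)
  have him {Z : Ω → ℂ} (hZ1 : ∀ ω, ‖Z ω‖ ≤ 1) (ω : Ω) : |(Z ω).im| ≤ 1 :=
    (Complex.abs_im_le_norm _).trans (hZ1 ω)
  have hXr : Measurable[m₁] fun ω => (X ω).re := Complex.measurable_re.comp hX
  have hXi : Measurable[m₁] fun ω => (X ω).im := Complex.measurable_im.comp hX
  have hYr : Measurable[m₂] fun ω => (Y ω).re := Complex.measurable_re.comp hY
  have hYi : Measurable[m₂] fun ω => (Y ω).im := Complex.measurable_im.comp hY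
  have := hmix.abs_covariance_le_of_abs_le_one hm₁ hm₂ hXr (hre hX1) hYr (hre hY1)
  have := hmix.abs_covariance_le_of_abs_le_one hm₁ hm₂ hXi (him hX1) hYi (him hY1)
  have := hmix.abs_covariance_le_of_abs_le_one hm₁ hm₂ hXr (hre hX1) hYi (him hY1)
  have := hmix.abs_covariance_le_of_abs_le_one hm₁ hm₂ hXi (him hX1) hYr (hre hY1)
  have := norm_integral_mul_sub_mul_integral_le hXL hYL
  linarith

end PhiMixingLE

theorem norm_integral_prod_sub_prod_integral_le {P : Measure Ω} [IsProbabilityMeasure P] {φ : ℝ}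
    {n : ℕ} {𝔉 : Fin (n + 1) → MeasurableSpace Ω} (h𝔉 : ∀ k, 𝔉 k ≤ mΩ)
    (hmix : ∀ k, PhiMixingLE P (𝔉 k) (⨆ j > k, 𝔉 j) φ) {Z : Fin (n + 1) → Ω → ℂ}
    (hZ : ∀ k, Measurable[𝔉 k] (Z k)) (hZ1 : ∀ k ω, ‖Z k ω‖ ≤ 1) :
    ‖∫ ω, ∏ k, Z k ω ∂P - ∏ k, ∫ ω, Z k ω ∂P‖ ≤ 16 * φ * n := by
  induction n with
  | zero => simp
  | succ n ih =>
    set W : Ω → ℂ := fun ω => ∏ k : Fin (n + 1), Z k.succ ω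
    have hW : Measurable[⨆ j > 0, 𝔉 j] W := Finset.measurable_prod _ fun k _ =>
      (hZ k.succ).mono (le_iSup₂_of_le k.succ k.succ_pos le_rfl) le_rfl
    have hW1 (ω : Ω) : ‖W ω‖ ≤ 1 := by
      simpa only [W, norm_prod] using
        Finset.prod_le_one (fun _ _ => norm_nonneg _) fun k _ => hZ1 k.succ ω
    have hhead := (hmix 0).norm_integral_mul_sub_le (h𝔉 0) (iSup₂_le fun j _ => h𝔉 j)
      (hZ 0) (hZ1 0) hW hW1
    have htail := ih (fun k => h𝔉 k.succ)
      (fun k => (hmix k.succ).mono_right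
        (iSup₂_le fun j hj => le_iSup₂_of_le j.succ (Fin.succ_lt_succ_iff.2 hj) le_rfl))
      (fun k => hZ k.succ) (fun k => hZ1 k.succ)
    have hZ0 : ‖∫ ω, Z 0 ω ∂P‖ ≤ 1 := by
      simpa using norm_integral_le_of_norm_le_const (μ := P) (ae_of_all _ (hZ1 0))
    simp only [Fin.prod_univ_succ (n := n + 1)]
    calc ‖∫ ω, Z 0 ω * W ω ∂P - (∫ ω, Z 0 ω ∂P) * ∏ k : Fin (n + 1), ∫ ω, Z k.succ ω ∂P‖
        = ‖(∫ ω, Z 0 ω * W ω ∂P - (∫ ω, Z 0 ω ∂P) * ∫ ω, W ω ∂P) +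
            (∫ ω, Z 0 ω ∂P) * (∫ ω, W ω ∂P - ∏ k : Fin (n + 1), ∫ ω, Z k.succ ω ∂P)‖ := by ring_nf
      _ ≤ 16 * φ + 1 * (16 * φ * n) := by
        grw [norm_add_le, norm_mul, hhead, hZ0, htail]
      _ = 16 * φ * ↑(n + 1) := by push_cast; ring

end Mixing

/-- Recursive factorization estimate (7.24') of the paper: there is a universal constant
`C > 0` such that for any probability space, sub-σ-algebras `𝔉₁, …, 𝔉_N` whose uniform
mixing coefficient of each `𝔉_k` against the σ-algebra generated by the later ones is at
most `φ`, and real random variables `ξ_k` measurable w.r.t. `𝔉_k`, one has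
`|E ∏ e^{iξ_k} - ∏ E e^{iξ_k}| ≤ C (N-1) φ`. -/
theorem mixing_characteristic_functional_factorization :
    ∃ C : ℝ, 0 < C ∧
      ∀ (Ω : Type) [mΩ : MeasurableSpace Ω] (P : Measure Ω),
        IsProbabilityMeasure P →
        ∀ (N : ℕ), 1 ≤ N →
        ∀ (𝔉 : Fin N → MeasurableSpace Ω), (∀ k, 𝔉 k ≤ mΩ) →
        ∀ (φ : ℝ), 0 ≤ φ →
        (∀ (k : Fin N) (A B : Set Ω), MeasurableSet[𝔉 k] A →
          MeasurableSet[⨆ j > k, 𝔉 j] B →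
          |(P (A ∩ B)).toReal - (P A).toReal * (P B).toReal| ≤ φ * (P B).toReal) →
        ∀ ξ : Fin N → Ω → ℝ, (∀ k, Measurable[𝔉 k] (ξ k)) →
        ‖(∫ ω, (∏ k, Complex.exp (Complex.I * (ξ k ω : ℝ))) ∂P) -
            ∏ k, ∫ ω, Complex.exp (Complex.I * (ξ k ω : ℝ)) ∂P‖ ≤
          C * ((N : ℝ) - 1) * φ := by
  refine ⟨16, by norm_num, fun Ω mΩ P _ N hN 𝔉 h𝔉 φ _ hmix ξ hξ => ?_⟩
  obtain ⟨n, rfl⟩ := Nat.exists_eq_add_of_le' hN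
  have h := norm_integral_prod_sub_prod_integral_le h𝔉 hmix
    (Z := fun k ω => Complex.exp (Complex.I * (ξ k ω : ℝ)))
    (fun k => Complex.measurable_exp.comp ((Complex.measurable_ofReal.comp (hξ k)).const_mul _))
    (fun k ω => by rw [mul_comm, Complex.norm_exp_ofReal_mul_I])
  simpa [mul_right_comm] using h
end

section
/- Let ν : [0,∞) → [0,∞) be nonincreasing with ∫₀^∞ r ν(r) dr < ∞, and let F : ℝ³ → ℝ be measurable with |F(p)| ≤ ν(|p|) for all p. Define g(x) = (1/(4π)²) ∫_{{ω : |ω| = 1, ω₃ > 0}} [ ∫_{{p ∈ ℝ³ : ⟨p, ω⟩ = ⟨x, ω⟩}} F(p) dH²(p) ] dS(ω). Then g is bounded on ℝ³ and g(x) → 0 as |x| → ∞. -/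
/-!
The plane `⟪p, ω⟫ = c` is an isometric copy of `ℝ²` on which `‖p‖ ≥ max |c| |y|`, so polar
coordinates bound the integral of `|F|` over it by a multiple of `Φ(c) = ∫₀^∞ r ν(max |c| r) dr`,
which is bounded and tends to `0` as `|c| → ∞`. Hence `|g x|` is at most a multiple of the sphere
integral of `Φ(⟪x, ω⟫)`. By rotation invariance of the Hausdorff measure this integral only depends
on `‖x‖`, and it tends to `0` as `‖x‖ → ∞` by dominated convergence: the sphere has finite area
(finitely many caps cover it, each a Lipschitz image of a disc) and great circles are null.
-/

open MeasureTheory Filter Set Metric Module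
open scoped RealInnerProductSpace Topology ENNReal

section TruncRadialIntegral

/-- `(2π)⁻¹ ∫_{ℝ²} ν (max |a| ‖y‖) dy`. On a plane at distance `|a|` from the origin,
`ν ‖p‖ ≤ ν (max |a| ‖y‖)` in orthonormal coordinates `y`. -/
noncomputable def truncRadialIntegral (ν : ℝ → ℝ) (a : ℝ) : ℝ := ∫ r in Ioi 0, r * ν (max |a| r)

variable {ν : ℝ → ℝ}

theorem exists_antitone_nonneg_eqOn_Ici (h0 : ∀ r, 0 ≤ r → 0 ≤ ν r)
    (hm : AntitoneOn ν (Ici 0)) :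
    ∃ φ : ℝ → ℝ, Antitone φ ∧ (∀ r, 0 ≤ φ r) ∧ EqOn φ ν (Ici 0) :=
  ⟨fun r => ν (max r 0),
    fun a b hab => hm (mem_Ici.mpr (le_max_right a 0)) (mem_Ici.mpr (le_max_right b 0))
      (max_le_max_right 0 hab),
    fun r => h0 _ (le_max_right r 0), fun r (hr : 0 ≤ r) => by simp [max_eq_left hr]⟩

theorem measurable_truncRadialIntegral (hν : Measurable ν) :
    Measurable (truncRadialIntegral ν) :=
  (StronglyMeasurable.integral_prod_right' (f := fun p : ℝ × ℝ => p.2 * ν (max |p.1| p.2))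
    (by fun_prop)).measurable

theorem truncRadialIntegral_nonneg (hν0 : ∀ r, 0 ≤ ν r) (a : ℝ) : 0 ≤ truncRadialIntegral ν a :=
  setIntegral_nonneg measurableSet_Ioi fun r (hr : 0 < r) => mul_nonneg hr.le (hν0 _)

theorem norm_mul_comp_max_le (hν : Antitone ν) (hν0 : ∀ r, 0 ≤ ν r) (a : ℝ) {r : ℝ}
    (hr : r ∈ Ioi 0) : ‖r * ν (max a r)‖ ≤ r * ν r := by
  rw [Real.norm_of_nonneg (mul_nonneg (le_of_lt hr) (hν0 _))]
  exact mul_le_mul_of_nonneg_left (hν (le_max_right a r)) (le_of_lt hr)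

theorem integrableOn_mul_comp_max (hν : Antitone ν) (hν0 : ∀ r, 0 ≤ ν r)
    (hi : IntegrableOn (fun r => r * ν r) (Ioi 0)) (a : ℝ) :
    IntegrableOn (fun r => r * ν (max a r)) (Ioi 0) :=
  hi.mono' (by have := hν.measurable; fun_prop) ((ae_restrict_iff' measurableSet_Ioi).mpr
    (ae_of_all _ fun _ => norm_mul_comp_max_le hν hν0 a))

theorem truncRadialIntegral_le_truncRadialIntegral_zero (hν : Antitone ν) (hν0 : ∀ r, 0 ≤ ν r)
    (hi : IntegrableOn (fun r => r * ν r) (Ioi 0)) (a : ℝ) :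
    truncRadialIntegral ν a ≤ truncRadialIntegral ν 0 :=
  setIntegral_mono_on (integrableOn_mul_comp_max hν hν0 hi _)
    (integrableOn_mul_comp_max hν hν0 hi _) measurableSet_Ioi fun r (hr : 0 < r) =>
      mul_le_mul_of_nonneg_left (hν (max_le_max_right r (by simp))) hr.le

theorem tendsto_atTop_zero_of_integrableOn_mul (hν : Antitone ν) (hν0 : ∀ r, 0 ≤ ν r)
    (hi : IntegrableOn (fun r => r * ν r) (Ioi 0)) :
    Tendsto ν atTop (𝓝 0) := by
  set I := ∫ r in Ioi 0, r * ν r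
  have hbound (a : ℝ) (ha : 1 < a) : ν a ≤ I / (a - 1) := by
    have hsub : Ioc 1 a ⊆ Ioi 0 := Ioc_subset_Ioi_self.trans (Ioi_subset_Ioi zero_le_one)
    rw [le_div_iff₀ (sub_pos.mpr ha), mul_comm]
    calc (a - 1) * ν a = ∫ _ in Ioc 1 a, ν a := by simp [ha.le]
      _ ≤ ∫ r in Ioc 1 a, r * ν r :=
          setIntegral_mono_on (integrableOn_const (by simp)) (hi.mono_set hsub)
            measurableSet_Ioc fun r hr => (hν hr.2).trans (le_mul_of_one_le_left (hν0 r) hr.1.le)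
      _ ≤ I := setIntegral_mono_set hi ((ae_restrict_iff' measurableSet_Ioi).mpr
            (ae_of_all _ fun r (hr : 0 < r) => mul_nonneg hr.le (hν0 r))) hsub.eventuallyLE
  refine tendsto_of_tendsto_of_tendsto_of_le_of_le' tendsto_const_nhds
    ((tendsto_const_nhds (x := I)).div_atTop (tendsto_atTop_add_const_right _ (-1) tendsto_id))
    (Eventually.of_forall hν0) ?_
  filter_upwards [eventually_gt_atTop 1] with a ha
  simpa [sub_eq_add_neg] using hbound a ha

theorem tendsto_truncRadialIntegral_cocompact (hν : Antitone ν) (hν0 : ∀ r, 0 ≤ ν r)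
    (hi : IntegrableOn (fun r => r * ν r) (Ioi 0)) :
    Tendsto (truncRadialIntegral ν) (cocompact ℝ) (𝓝 0) := by
  have hlim (r : ℝ) : Tendsto (fun a => r * ν (max |a| r)) (cocompact ℝ) (𝓝 0) := by
    simpa using ((tendsto_atTop_zero_of_integrableOn_mul hν hν0 hi).comp
      (tendsto_atTop_mono (fun a => le_max_left |a| r) tendsto_norm_cocompact_atTop)).const_mul r
  rw [cocompact_eq_atBot_atTop] at hlim ⊢
  unfold truncRadialIntegral
  simpa using tendsto_integral_filter_of_dominated_convergence _
    (Eventually.of_forall fun a => (integrableOn_mul_comp_max hν hν0 hi _).aestronglyMeasurable)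
    (Eventually.of_forall fun a => (ae_restrict_iff' measurableSet_Ioi).mpr
      (ae_of_all _ fun _ => norm_mul_comp_max_le hν hν0 _))
    hi (ae_of_all _ hlim)

end TruncRadialIntegral

theorem Isometry.setIntegral_range_hausdorffMeasure {X Y G : Type*} [EMetricSpace X]
    [CompleteSpace X] [MeasurableSpace X] [BorelSpace X] [EMetricSpace Y] [MeasurableSpace Y]
    [BorelSpace Y] [NormedAddCommGroup G] [NormedSpace ℝ G] {e : X → Y} (he : Isometry e)
    {d : ℝ} (hd : 0 ≤ d) (f : Y → G) :
    ∫ y in range e, f y ∂μH[d] = ∫ x, f (e x) ∂μH[d] := by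
  rw [← he.map_hausdorffMeasure (Or.inl hd), he.isClosedEmbedding.measurableEmbedding.integral_map]

section Hyperplane

variable {E : Type*} [NormedAddCommGroup E] [InnerProductSpace ℝ E] {n : ℕ}

theorem exists_isometry_euclideanSpace_hyperplane (hn : finrank ℝ E = n + 1) {ω : E}
    (hω : ‖ω‖ = 1) (c : ℝ) :
    ∃ G : EuclideanSpace ℝ (Fin n) → E, Isometry G ∧ range G = {p | ⟪p, ω⟫ = c} ∧
      ∀ y, ‖G y‖ ^ 2 = c ^ 2 + ‖y‖ ^ 2 := by
  have : Fact (finrank ℝ E = n + 1) := ⟨hn⟩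
  have := FiniteDimensional.of_fact_finrank_eq_succ (K := ℝ) (V := E) n
  have hω0 : ω ≠ 0 := by rintro rfl; simp at hω
  let L : EuclideanSpace ℝ (Fin n) ≃ₗᵢ[ℝ] (ℝ ∙ ω)ᗮ :=
    ((stdOrthonormalBasis ℝ (ℝ ∙ ω)ᗮ).reindex
      (finCongr (Submodule.finrank_orthogonal_span_singleton hω0))).repr.symm
  have horth (y) : ⟪ω, (L y : E)⟫ = 0 :=
    Submodule.mem_orthogonal_singleton_iff_inner_right.mp (L y).2
  refine ⟨fun y => c • ω + (L y : E), ?_, ?_, fun y => ?_⟩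
  · refine Isometry.of_dist_eq fun y y' => ?_
    rw [dist_add_left]
    exact L.dist_map y y'
  · ext p
    refine ⟨?_, fun hp => ?_⟩
    · rintro ⟨y, rfl⟩
      change ⟪c • ω + (L y : E), ω⟫ = c
      rw [inner_add_left, real_inner_smul_left, real_inner_self_eq_norm_sq, hω, real_inner_comm,
        horth]
      ring
    · have hk : p - c • ω ∈ (ℝ ∙ ω)ᗮ := by
        rw [Submodule.mem_orthogonal_singleton_iff_inner_right, inner_sub_right,
          real_inner_smul_right, real_inner_self_eq_norm_sq, hω, real_inner_comm, hp]
        ring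
      exact ⟨L.symm ⟨_, hk⟩, by simp⟩
  · rw [norm_add_sq_real, real_inner_smul_left, horth, norm_smul, hω, mul_one, Real.norm_eq_abs,
      sq_abs, ← Submodule.coe_norm, L.norm_map]
    ring

variable [MeasurableSpace E] [BorelSpace E]

theorem abs_setIntegral_hyperplane_le [NeZero n] (hn : finrank ℝ E = n + 1) {ω : E}
    (hω : ‖ω‖ = 1) (c : ℝ) {F : E → ℝ} {φ : ℝ → ℝ} (hφ : Antitone φ)
    (hF : ∀ p, |F p| ≤ φ ‖p‖)
    (hint : IntegrableOn (fun r => r ^ (n - 1) * φ (max |c| r)) (Ioi 0)) :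
    |∫ p in {p | ⟪p, ω⟫ = c}, F p ∂μH[n]| ≤
      n * μH[n].real (ball (0 : EuclideanSpace ℝ (Fin n)) 1) *
        ∫ r in Ioi 0, r ^ (n - 1) * φ (max |c| r) := by
  obtain ⟨G, hG, hrange, hnorm⟩ := exists_isometry_euclideanSpace_hyperplane hn hω c
  have hmax (y) : max |c| ‖y‖ ≤ ‖G y‖ := by
    refine max_le ?_ ?_ <;> rw [← sq_le_sq₀ (by positivity) (norm_nonneg _), hnorm]
    · nlinarith [sq_abs c, sq_nonneg ‖y‖]
    · nlinarith [sq_nonneg c]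
  have hint' : Integrable (fun y : EuclideanSpace ℝ (Fin n) => φ (max |c| ‖y‖)) μH[n] := by
    refine (integrable_fun_norm_addHaar _ (f := fun r => φ (max |c| r))).mpr ?_
    simpa using hint
  rw [← hrange, hG.setIntegral_range_hausdorffMeasure (Nat.cast_nonneg n)]
  calc |∫ y, F (G y) ∂μH[n]| = ‖∫ y, F (G y) ∂μH[n]‖ := (Real.norm_eq_abs _).symm
    _ ≤ ∫ y : EuclideanSpace ℝ (Fin n), φ (max |c| ‖y‖) ∂μH[n] :=
        norm_integral_le_of_norm_le hint' (ae_of_all _ fun y => (hF _).trans (hφ (hmax y)))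
    _ = _ := by
        rw [integral_fun_norm_addHaar _ (fun r => φ (max |c| r))]
        simp [smul_eq_mul, mul_assoc]

theorem abs_setIntegral_hyperplane_le_truncRadialIntegral (hn : finrank ℝ E = 3) {ω : E}
    (hω : ‖ω‖ = 1) (c : ℝ) {F : E → ℝ} {φ : ℝ → ℝ} (hφ : Antitone φ) (hφ0 : ∀ r, 0 ≤ φ r)
    (hφi : IntegrableOn (fun r => r * φ r) (Ioi 0)) (hF : ∀ p, |F p| ≤ φ ‖p‖) :
    |∫ p in {p | ⟪p, ω⟫ = c}, F p ∂μH[2]| ≤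
      2 * μH[2].real (ball (0 : EuclideanSpace ℝ (Fin 2)) 1) * truncRadialIntegral φ c := by
  have h := abs_setIntegral_hyperplane_le (n := 2) hn hω c hφ hF
    (by simpa using integrableOn_mul_comp_max hφ hφ0 hφi |c|)
  simp only [Nat.cast_ofNat, Nat.reduceSub, pow_one] at h
  exact h

end Hyperplane

theorem lipschitzOnWith_normalize {V : Type*} [NormedAddCommGroup V] [NormedSpace ℝ V] :
    LipschitzOnWith 2 (NormedSpace.normalize : V → V) {v | 1 ≤ ‖v‖} := by
  refine LipschitzOnWith.of_dist_le_mul fun v (hv : 1 ≤ ‖v‖) w (hw : 1 ≤ ‖w‖) => ?_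
  have hv0 : 0 < ‖v‖ := one_pos.trans_le hv
  have hw0 : 0 < ‖w‖ := one_pos.trans_le hw
  have hsplit : NormedSpace.normalize v - NormedSpace.normalize w =
      ‖v‖⁻¹ • (v - w) + (‖v‖⁻¹ - ‖w‖⁻¹) • w := by
    simp only [NormedSpace.normalize, smul_sub, sub_smul]
    abel
  have h₁ : ‖‖v‖⁻¹ • (v - w)‖ ≤ ‖v - w‖ := by
    rw [norm_smul, norm_inv, norm_norm]
    exact mul_le_of_le_one_left (norm_nonneg _) (inv_le_one_of_one_le₀ hv)
  -- `‖(‖v‖⁻¹ - ‖w‖⁻¹) • w‖ = |‖w‖ - ‖v‖| / ‖v‖`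
  have h₂ : ‖(‖v‖⁻¹ - ‖w‖⁻¹) • w‖ ≤ ‖v - w‖ := by
    rw [norm_smul, Real.norm_eq_abs, inv_sub_inv hv0.ne' hw0.ne', abs_div,
      abs_of_pos (mul_pos hv0 hw0), div_mul_eq_mul_div, div_le_iff₀ (mul_pos hv0 hw0)]
    calc |‖w‖ - ‖v‖| * ‖w‖ ≤ ‖v - w‖ * ‖w‖ := by
          gcongr; rw [norm_sub_rev]; exact abs_norm_sub_norm_le w v
      _ ≤ ‖v - w‖ * (‖v‖ * ‖w‖) := by gcongr; exact le_mul_of_one_le_left hw0.le hv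
  rw [dist_eq_norm, dist_eq_norm, hsplit]
  calc _ ≤ ‖‖v‖⁻¹ • (v - w)‖ + ‖(‖v‖⁻¹ - ‖w‖⁻¹) • w‖ := norm_add_le _ _
    _ ≤ 2 * ‖v - w‖ := by linarith
    _ = _ := by norm_num

section Sphere

variable {E : Type*} [NormedAddCommGroup E] [InnerProductSpace ℝ E] [MeasurableSpace E]
  [BorelSpace E] {n : ℕ}

theorem hausdorffMeasure_sphere_lt_top (hn : finrank ℝ E = n + 1) :
    μH[n] (sphere (0 : E) 1) < ∞ := by
  have : Fact (finrank ℝ E = n + 1) := ⟨hn⟩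
  have := FiniteDimensional.of_fact_finrank_eq_succ (K := ℝ) (V := E) n
  refine (isCompact_sphere 0 1).measure_lt_top_of_nhdsWithin fun ω₀ hω₀ => ?_
  rw [mem_sphere_zero_iff_norm] at hω₀
  obtain ⟨G, hG, hrange, hnorm⟩ := exists_isometry_euclideanSpace_hyperplane hn hω₀ 1
  -- Radial projection from the tangent plane `⟪p, ω₀⟫ = 1` covers the cap `⟪ω, ω₀⟫ > 1/2`.
  have hcap : sphere (0 : E) 1 ∩ {ω | 1 / 2 < ⟪ω, ω₀⟫} ⊆
      NormedSpace.normalize '' (G '' closedBall 0 2) := by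
    rintro ω ⟨hω, hω₀ω : 1 / 2 < ⟪ω, ω₀⟫⟩
    rw [mem_sphere_zero_iff_norm] at hω
    have ht : 0 < ⟪ω, ω₀⟫ := by linarith
    obtain ⟨y, hy⟩ : ⟪ω, ω₀⟫⁻¹ • ω ∈ range G := by
      rw [hrange]
      exact (real_inner_smul_left _ _ _).trans (inv_mul_cancel₀ ht.ne')
    refine ⟨G y, mem_image_of_mem G ?_, ?_⟩
    · have hGy : ‖G y‖ < 2 := by
        rw [hy, norm_smul, hω, mul_one, norm_inv, Real.norm_of_nonneg ht.le]
        exact inv_lt_of_inv_lt₀ two_pos (by linarith)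
      rw [mem_closedBall_zero_iff]
      nlinarith [hnorm y, norm_nonneg y, norm_nonneg (G y)]
    · rw [hy, NormedSpace.normalize_smul_of_pos (inv_pos.mpr ht),
        NormedSpace.normalize_eq_self_of_norm_eq_one hω]
  have hlip : LipschitzOnWith 2 NormedSpace.normalize (G '' closedBall 0 2) :=
    lipschitzOnWith_normalize.mono <| image_subset_iff.mpr fun y _ => by
      show 1 ≤ ‖G y‖
      nlinarith [hnorm y, norm_nonneg (G y), sq_nonneg ‖y‖]
  refine ⟨sphere (0 : E) 1 ∩ {ω | 1 / 2 < ⟪ω, ω₀⟫}, inter_mem_nhdsWithin _ (IsOpen.mem_nhds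
    (isOpen_lt continuous_const (continuous_id.inner continuous_const)) ?_), ?_⟩
  · show 1 / 2 < ⟪ω₀, ω₀⟫
    rw [real_inner_self_eq_norm_sq, hω₀]
    norm_num
  calc μH[n] (sphere (0 : E) 1 ∩ {ω | 1 / 2 < ⟪ω, ω₀⟫})
      ≤ μH[n] (NormedSpace.normalize '' (G '' closedBall 0 2)) := measure_mono hcap
    _ ≤ 2 ^ (n : ℝ) * μH[n] (G '' closedBall 0 2) := hlip.hausdorffMeasure_image_le (by positivity)
    _ < ∞ := by
        rw [hG.hausdorffMeasure_image (Or.inl (by positivity))]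
        exact ENNReal.mul_lt_top (by simp) (isCompact_closedBall 0 2).measure_lt_top

theorem hausdorffMeasure_sphere_inter_inner_eq_zero [NeZero n] (hn : finrank ℝ E = n + 1)
    {u : E} (hu : ‖u‖ = 1) : μH[n] (sphere (0 : E) 1 ∩ {ω | ⟪ω, u⟫ = 0}) = 0 := by
  obtain ⟨G, hG, hrange, hnorm⟩ := exists_isometry_euclideanSpace_hyperplane hn hu 0
  refine measure_mono_null (t := G '' sphere 0 1) ?_ ?_
  · rintro ω ⟨hω, hωu⟩
    obtain ⟨y, rfl⟩ : ω ∈ range G := hrange ▸ hωu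
    refine mem_image_of_mem G ?_
    rw [mem_sphere_zero_iff_norm] at hω ⊢
    have := hnorm y
    rw [hω] at this
    nlinarith [norm_nonneg y]
  · rw [hG.hausdorffMeasure_image (Or.inl (by positivity))]
    exact Measure.addHaar_sphere _ 0 1

theorem setIntegral_sphere_inner_eq_of_norm_eq (d : ℝ) (f : ℝ → ℝ)
    {x y : E} (h : ‖x‖ = ‖y‖) :
    ∫ ω in sphere (0 : E) 1, f ⟪x, ω⟫ ∂μH[d] = ∫ ω in sphere (0 : E) 1, f ⟪y, ω⟫ ∂μH[d] := by
  set R := (ℝ ∙ (x - y))ᗮ.reflection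
  have hRx : R x = y := Submodule.reflection_sub h
  have hR : R ⁻¹' sphere 0 1 = sphere 0 1 := by ext ω; simp
  calc ∫ ω in sphere (0 : E) 1, f ⟪x, ω⟫ ∂μH[d]
      = ∫ ω in R ⁻¹' sphere 0 1, f ⟪y, R ω⟫ ∂μH[d] := by
        rw [hR, ← hRx]
        simp only [LinearIsometryEquiv.inner_map_map]
    _ = _ := (R.toIsometryEquiv.measurePreserving_hausdorffMeasure d).setIntegral_preimage_emb
        R.toHomeomorph.measurableEmbedding (fun ω => f ⟪y, ω⟫) _

theorem tendsto_setIntegral_sphere_inner_cocompact [NeZero n] (hn : finrank ℝ E = n + 1)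
    {f : ℝ → ℝ} (hfm : Measurable f) {C : ℝ} (hfC : ∀ t, |f t| ≤ C)
    (hf : Tendsto f (cocompact ℝ) (𝓝 0)) :
    Tendsto (fun x => ∫ ω in sphere (0 : E) 1, f ⟪x, ω⟫ ∂μH[n]) (cocompact E) (𝓝 0) := by
  have : Fact (finrank ℝ E = n + 1) := ⟨hn⟩
  have := FiniteDimensional.of_fact_finrank_eq_succ (K := ℝ) (V := E) n
  have := Module.nontrivial_of_finrank_eq_succ hn
  have := isFiniteMeasure_restrict.mpr (hausdorffMeasure_sphere_lt_top hn).ne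
  obtain ⟨u, hu⟩ := exists_norm_eq E zero_le_one
  -- By rotation invariance we may take `x = ‖x‖ • u`; off the null great circle `⟪u, ω⟫ = 0`
  -- the integrand then tends to `0`.
  have hrot (x : E) : ∫ ω in sphere (0 : E) 1, f ⟪x, ω⟫ ∂μH[n] =
      ∫ ω in sphere (0 : E) 1, f (‖x‖ * ⟪u, ω⟫) ∂μH[n] := by
    simp_rw [← real_inner_smul_left]
    exact setIntegral_sphere_inner_eq_of_norm_eq _ _ (by simp [norm_smul, hu])
  simp_rw [hrot]
  refine Tendsto.comp (g := fun t : ℝ => ∫ ω in sphere (0 : E) 1, f (t * ⟪u, ω⟫) ∂μH[n]) ?_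
    tendsto_norm_cocompact_atTop
  have hae : ∀ᵐ ω ∂μH[n].restrict (sphere (0 : E) 1), ⟪u, ω⟫ ≠ 0 := by
    rw [ae_restrict_iff' isClosed_sphere.measurableSet]
    filter_upwards [measure_eq_zero_iff_ae_notMem.mp
      (hausdorffMeasure_sphere_inter_inner_eq_zero hn hu)] with ω hω hωS
    rw [real_inner_comm]
    exact fun h => hω ⟨hωS, h⟩
  have hlin {a : ℝ} (ha : a ≠ 0) : Tendsto (fun t : ℝ => t * a) atTop (cocompact ℝ) := by
    rw [← Metric.cobounded_eq_cocompact, ← tendsto_norm_atTop_iff_cobounded]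
    simp_rw [norm_mul]
    exact Tendsto.atTop_mul_const (norm_pos_iff.mpr ha) tendsto_norm_atTop_atTop
  simpa using tendsto_integral_filter_of_dominated_convergence (fun _ => C)
    (Eventually.of_forall fun t => (hfm.comp
      (by fun_prop : Continuous fun ω : E => t * ⟪u, ω⟫).measurable).aestronglyMeasurable)
    (Eventually.of_forall fun t => ae_of_all _ fun ω => hfC _) (integrable_const C)
    (hae.mono fun ω hω => hf.comp (hlin hω))

theorem bounded_and_tendsto_setIntegral_of_abs_le_inner [NeZero n] (hn : finrank ℝ E = n + 1)
    {s : Set E} (hsm : MeasurableSet s) (hs : s ⊆ sphere 0 1) {f : ℝ → ℝ} (hfm : Measurable f)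
    (hf0 : ∀ t, 0 ≤ f t) {C : ℝ} (hfC : ∀ t, f t ≤ C) (hf : Tendsto f (cocompact ℝ) (𝓝 0))
    {I : E → E → ℝ} (hI : ∀ x, ∀ ω ∈ s, |I x ω| ≤ f ⟪x, ω⟫) :
    (∃ M, ∀ x, |∫ ω in s, I x ω ∂μH[n]| ≤ M) ∧
      Tendsto (fun x => ∫ ω in s, I x ω ∂μH[n]) (cocompact E) (𝓝 0) := by
  have hS := hausdorffMeasure_sphere_lt_top hn
  have hint (x : E) : IntegrableOn (fun ω => f ⟪x, ω⟫) (sphere (0 : E) 1) μH[n] :=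
    Measure.integrableOn_of_bounded (M := C) hS.ne
      (hfm.comp (continuous_const.inner continuous_id).measurable).aestronglyMeasurable
      (ae_of_all _ fun ω => (Real.norm_of_nonneg (hf0 _)).trans_le (hfC _))
  have hle (x : E) : |∫ ω in s, I x ω ∂μH[n]| ≤ ∫ ω in sphere (0 : E) 1, f ⟪x, ω⟫ ∂μH[n] :=
    calc |∫ ω in s, I x ω ∂μH[n]| = ‖∫ ω in s, I x ω ∂μH[n]‖ := (Real.norm_eq_abs _).symm
      _ ≤ ∫ ω in s, f ⟪x, ω⟫ ∂μH[n] := norm_integral_le_of_norm_le ((hint x).mono_set hs)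
          ((ae_restrict_iff' hsm).mpr (ae_of_all _ (hI x)))
      _ ≤ _ := setIntegral_mono_set (hint x) (ae_of_all _ fun ω => hf0 _) hs.eventuallyLE
  refine ⟨⟨C * μH[n].real (sphere (0 : E) 1), fun x => (hle x).trans ?_⟩,
    squeeze_zero_norm hle (tendsto_setIntegral_sphere_inner_cocompact hn hfm
      (fun t => (abs_of_nonneg (hf0 t)).trans_le (hfC t)) hf)⟩
  exact (Real.le_norm_self _).trans (norm_setIntegral_le_of_norm_le_const hS
    fun ω _ => (Real.norm_of_nonneg (hf0 _)).trans_le (hfC _))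

end Sphere

theorem radon_half_average_bounded_decay_general
    (ν : ℝ → ℝ) (h0 : ∀ r, 0 ≤ r → 0 ≤ ν r) (hm : AntitoneOn ν (Set.Ici 0))
    (hi : MeasureTheory.IntegrableOn (fun r => r * ν r) (Set.Ioi 0))
    (F : EuclideanSpace ℝ (Fin 3) → ℝ) (hFb : ∀ p, |F p| ≤ ν ‖p‖)
    (g : EuclideanSpace ℝ (Fin 3) → ℝ)
    (hg : ∀ x, g x = (1 / (4 * Real.pi) ^ 2) *
      ∫ ω in {ω : EuclideanSpace ℝ (Fin 3) | ‖ω‖ = 1 ∧ 0 < ω 2},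
        (∫ p in {p : EuclideanSpace ℝ (Fin 3) | ⟪p, ω⟫ = ⟪x, ω⟫}, F p ∂(μH[2])) ∂(μH[2])) :
    (∃ M : ℝ, ∀ x, |g x| ≤ M) ∧
      Tendsto g (cocompact (EuclideanSpace ℝ (Fin 3))) (nhds 0) := by
  obtain ⟨φ, hφ, hφ0, hφν⟩ := exists_antitone_nonneg_eqOn_Ici h0 hm
  have hφi : IntegrableOn (fun r => r * φ r) (Ioi 0) :=
    hi.congr_fun (fun r hr => by rw [hφν (mem_Ioi.mp hr).le]) measurableSet_Ioi
  set A := 2 * μH[2].real (ball (0 : EuclideanSpace ℝ (Fin 2)) 1)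
  have hA : 0 ≤ A := mul_nonneg zero_le_two measureReal_nonneg
  obtain ⟨⟨M, hM⟩, hlim⟩ := bounded_and_tendsto_setIntegral_of_abs_le_inner (n := 2)
    (E := EuclideanSpace ℝ (Fin 3)) (s := {ω | ‖ω‖ = 1 ∧ 0 < ω 2}) (by simp) (by measurability)
    (fun ω hω => by simpa using hω.1)
    ((measurable_truncRadialIntegral hφ.measurable).const_mul A)
    (fun t => mul_nonneg hA (truncRadialIntegral_nonneg hφ0 t))
    (fun t => mul_le_mul_of_nonneg_left
      (truncRadialIntegral_le_truncRadialIntegral_zero hφ hφ0 hφi t) hA)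
    (by simpa using (tendsto_truncRadialIntegral_cocompact hφ hφ0 hφi).const_mul A)
    fun x ω hω => abs_setIntegral_hyperplane_le_truncRadialIntegral (by simp) hω.1 _ hφ hφ0 hφi
      fun p => hφν (norm_nonneg p) ▸ hFb p
  refine ⟨⟨1 / (4 * Real.pi) ^ 2 * M, fun x => ?_⟩, ?_⟩
  · rw [hg, abs_mul, abs_of_pos (by positivity)]
    exact mul_le_mul_of_nonneg_left (by simpa using hM x) (by positivity)
  · rw [show g = _ from funext hg]
    simpa only [Nat.cast_ofNat, mul_zero] using hlim.const_mul (1 / (4 * Real.pi) ^ 2)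

/-- Decay of the half-sphere Radon average (formulas (6.5)-(6.6) of the paper): if
`|F(p)| ≤ ν(|p|)` with `ν` nonincreasing and `∫₀^∞ r ν(r) dr < ∞`, then
`g(x) = (1/(4π)²) ∫_{|ω|=1, ω₃>0} ∫_{⟨p,ω⟩=⟨x,ω⟩} F(p) dH²(p) dS(ω)` is bounded on `ℝ³`
and `g(x) → 0` as `|x| → ∞`. -/
theorem radon_half_average_bounded_decay
    (ν : ℝ → ℝ) (h0 : ∀ r, 0 ≤ r → 0 ≤ ν r) (hm : AntitoneOn ν (Set.Ici 0))
    (hi : MeasureTheory.IntegrableOn (fun r => r * ν r) (Set.Ioi 0))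
    (F : EuclideanSpace ℝ (Fin 3) → ℝ) (hFm : Measurable F) (hFb : ∀ p, |F p| ≤ ν ‖p‖)
    (g : EuclideanSpace ℝ (Fin 3) → ℝ)
    (hg : ∀ x, g x = (1 / (4 * Real.pi) ^ 2) *
      ∫ ω in {ω : EuclideanSpace ℝ (Fin 3) | ‖ω‖ = 1 ∧ 0 < ω 2},
        (∫ p in {p : EuclideanSpace ℝ (Fin 3) | ⟪p, ω⟫ = ⟪x, ω⟫}, F p ∂(μH[2])) ∂(μH[2])) :
    (∃ M : ℝ, ∀ x, |g x| ≤ M) ∧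
      Tendsto g (cocompact (EuclideanSpace ℝ (Fin 3))) (nhds 0) :=
  radon_half_average_bounded_decay_general ν h0 hm hi F hFb g hg
end
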